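/- arXiv:1805.11376 — 2 statements merged into one kernel-verified Lean document; each statement's English description precedes it below -/
import Mathlib

section
/- Let n ≥ 3 and let α ∈ B_n, and let π = σ(α)^{-1} ∈ S_n. Then for all 1 ≤ i < j ≤ n and 1 ≤ r < s ≤ n, the element α·[A_{i,j}, A_{r,s}]·α^{-1}·[A_{π(i),π(j)}, A_{π(r),π(s)}]^{-1} belongs to Γ_3(P_n); that is, α·[A_{i,j}, A_{r,s}]·α^{-1} = [A_{π(i),π(j)}, A_{π(r),π(s)}] holds in P_n/Γ_3(P_n). -/
/-!
Conjugation by a braid `α` permutes the generators `A_{i,j}` of `P_n` up to conjugation by pure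
braids: `α A_{i,j} α⁻¹` is `P_n`-conjugate to `A_{π i, π j}`. It suffices to check this for an
Artin generator `σ_a`. With `s` the transposition `(a, a+1)`, either
`σ_a A_{i,j} σ_a⁻¹ = A_{s i, s j}` or `σ_a A_{s i, s j} σ_a⁻¹ = A_{i,j}`, and in the second case
`σ_a A_{i,j} σ_a⁻¹` is the conjugate of `A_{s i, s j}` by the pure braid `σ_a²`.
In any group `H`, conjugating `x` and `y` does not change `[x, y]` modulo `Γ_3(H)`: indeed
`w x w⁻¹ = [w, x] x`, and `Γ_2(H)` becomes central in `H / Γ_3(H)`. Apply this with `H = P_n`.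
-/

namespace BraidProj

/-- The commutation relator `σᵢσⱼσᵢ⁻¹σⱼ⁻¹` in the free group. -/
def σrel1 {m : ℕ} (i j : Fin m) : FreeGroup (Fin m) :=
  .of i * .of j * (.of i)⁻¹ * (.of j)⁻¹

/-- The braid relator `σᵢσⱼσᵢ(σⱼσᵢσⱼ)⁻¹` in the free group. -/
def σrel2 {m : ℕ} (i j : Fin m) : FreeGroup (Fin m) :=
  .of i * .of j * .of i * (.of j * .of i * .of j)⁻¹

/-- The braid relations for the Artin braid group on `n` strings:
generators `σ_1, …, σ_{n-1}` are indexed (0-based) by `Fin (n-1)`. -/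
def braidRels (n : ℕ) : Set (FreeGroup (Fin (n - 1))) :=
  {r | (∃ i j : Fin (n - 1), (i : ℕ) + 2 ≤ (j : ℕ) ∧ r = σrel1 i j) ∨
       (∃ i j : Fin (n - 1), (i : ℕ) + 1 = (j : ℕ) ∧ r = σrel2 i j)}

/-- The Artin braid group `B_n` on `n` strings, as a presented group. -/
abbrev B (n : ℕ) : Type := PresentedGroup (braidRels n)

/-- The `i`-th Artin generator (0-based), with junk value `1` if out of range. -/
def braidGen (n : ℕ) (i : ℕ) : B n :=
  if h : i < n - 1 then PresentedGroup.of ⟨i, h⟩ else 1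

/-- The transposition `(i, i+1)` (0-based) in `S_n`, the image of the Artin
generator `σ` indexed by `i : Fin (n-1)`. -/
def permGen (n : ℕ) (i : Fin (n - 1)) : Equiv.Perm (Fin n) :=
  Equiv.swap ⟨(i : ℕ), by have := i.isLt; omega⟩ ⟨(i : ℕ) + 1, by have := i.isLt; omega⟩

lemma swap_commute_of {α : Type*} [DecidableEq α] {a b c d : α}
    (hac : a ≠ c) (had : a ≠ d) (hbc : b ≠ c) (hbd : b ≠ d) :
    Commute (Equiv.swap a b) (Equiv.swap c d) := by
  apply Equiv.Perm.Disjoint.commute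
  intro x
  by_cases hxa : x = a
  · subst hxa; right; exact Equiv.swap_apply_of_ne_of_ne hac had
  by_cases hxb : x = b
  · subst hxb; right; exact Equiv.swap_apply_of_ne_of_ne hbc hbd
  · left; exact Equiv.swap_apply_of_ne_of_ne hxa hxb

lemma swap_braid {α : Type*} [DecidableEq α] {a b c : α}
    (hab : a ≠ b) (hbc : b ≠ c) (hac : a ≠ c) :
    Equiv.swap a b * Equiv.swap b c * Equiv.swap a b =
      Equiv.swap b c * Equiv.swap a b * Equiv.swap b c := by
  ext x
  simp only [Equiv.Perm.mul_apply]
  by_cases hxa : x = a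
  · subst hxa
    simp [Equiv.swap_apply_left, Equiv.swap_apply_right,
      Equiv.swap_apply_of_ne_of_ne, hab, hbc, hac, hab.symm, hbc.symm, hac.symm]
  by_cases hxb : x = b
  · subst hxb
    simp [Equiv.swap_apply_left, Equiv.swap_apply_right,
      Equiv.swap_apply_of_ne_of_ne, hab, hbc, hac, hab.symm, hbc.symm, hac.symm]
  by_cases hxc : x = c
  · subst hxc
    simp [Equiv.swap_apply_left, Equiv.swap_apply_right,
      Equiv.swap_apply_of_ne_of_ne, hab, hbc, hac, hab.symm, hbc.symm, hac.symm]
  · simp [Equiv.swap_apply_of_ne_of_ne, hxa, hxb, hxc]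

lemma braidRels_hold (n : ℕ) :
    ∀ r ∈ braidRels n, FreeGroup.lift (permGen n) r = 1 := by
  rintro r (⟨i, j, hij, rfl⟩ | ⟨i, j, hij, rfl⟩) <;>
    simp only [σrel1, σrel2, map_mul, map_inv, FreeGroup.lift_apply_of]
  · have hi := i.isLt
    have hj := j.isLt
    have hcomm : Commute (permGen n i) (permGen n j) := by
      apply swap_commute_of <;> · simp only [ne_eq, Fin.mk.injEq]; omega
    have : permGen n i * permGen n j * (permGen n i)⁻¹ * (permGen n j)⁻¹ = 1 := by
      rw [hcomm.eq]; group
    exact this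
  · have hi := i.isLt
    have hj := j.isLt
    have h2 : permGen n j =
        Equiv.swap ⟨(i : ℕ) + 1, by omega⟩ ⟨(i : ℕ) + 2, by omega⟩ := by
      unfold permGen
      congr 1 <;> · simp only [Fin.mk.injEq]; omega
    have h1 : permGen n i =
        Equiv.swap (⟨(i : ℕ), by omega⟩ : Fin n) ⟨(i : ℕ) + 1, by omega⟩ := rfl
    rw [h1, h2, mul_inv_eq_one]
    apply swap_braid <;> · simp only [ne_eq, Fin.mk.injEq]; omega

/-- The canonical projection `σ : B_n → S_n` sending `σᵢ` to the
transposition `(i, i+1)`. -/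
def braidπ (n : ℕ) : B n →* Equiv.Perm (Fin n) :=
  PresentedGroup.toGroup (braidRels_hold n)

/-- The pure braid group `P_n`, the kernel of `σ : B_n → S_n`. -/
def P (n : ℕ) : Subgroup (B n) := (braidπ n).ker

instance P_normal (n : ℕ) : (P n).Normal := MonoidHom.normal_ker _

/-- `Γ_k(P_n)`, the `k`-th term of the lower central series of the pure braid
group (with `Γ_1(P_n) = P_n`), viewed as a subgroup of `B_n`. -/
def gammaB (n k : ℕ) : Subgroup (B n) :=
  (Subgroup.lowerCentralSeries (⊤ : Subgroup (P n)) (k - 1)).map (P n).subtype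

instance gammaB_normal (n k : ℕ) : (gammaB n k).Normal := by
  constructor
  rintro x ⟨y, hy, rfl⟩ g
  let f : P n →* P n := (MulAut.conjNormal g).toMonoidHom
  have hmem : f y ∈ Subgroup.lowerCentralSeries (⊤ : Subgroup (P n)) (k - 1) :=
    Subgroup.lowerCentralSeries.map f (k - 1) (Subgroup.mem_map_of_mem f hy)
  refine ⟨f y, hmem, ?_⟩
  simp [f, MulAut.conjNormal_apply]

lemma gammaB_le_P (n k : ℕ) : gammaB n k ≤ P n := Subgroup.map_subtype_le _

/-- The homomorphism `σ̄ : B_n/Γ_k(P_n) → S_n` induced by `σ`. -/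
def braidπbar (n k : ℕ) : B n ⧸ gammaB n k →* Equiv.Perm (Fin n) :=
  QuotientGroup.lift _ (braidπ n)
    (fun x hx => MonoidHom.mem_ker.mp (gammaB_le_P n k hx))

/-- The word `σ_{j-1} ⋯ σ_{i+1}` (paper 1-based indices). -/
def braidChain (n i j : ℕ) : B n :=
  ((List.range (j - 1 - i)).map (fun t => braidGen n (j - 2 - t))).prod

/-- The standard pure braid generator `A_{i,j} = σ_{j-1}⋯σ_{i+1} σ_i² σ_{i+1}⁻¹⋯σ_{j-1}⁻¹`
(paper 1-based indices, `1 ≤ i < j ≤ n`). -/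
def braidA (n i j : ℕ) : B n :=
  braidChain n i j * (braidGen n (i - 1)) ^ 2 * (braidChain n i j)⁻¹

/-- `A_{i,j}` with the convention `A_{j,i} = A_{i,j}`. -/
def braidAsym (n i j : ℕ) : B n := if i ≤ j then braidA n i j else braidA n j i

end BraidProj


open scoped commutatorElement

section GroupLemmas

variable {G : Type*} [Group G]

theorem commute_conj_of_braid {x y m : G} (hb : x * y * x = y * x * y) (hm : Commute y m) :
    Commute x (y * (x * m * x⁻¹) * y⁻¹) := by
  refine mul_inv_eq_iff_eq_mul.mp ?_
  calc x * (y * (x * m * x⁻¹) * y⁻¹) * x⁻¹ = (x * y * x) * m * (x * y * x)⁻¹ := by group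
    _ = y * (x * (y * m * y⁻¹) * x⁻¹) * y⁻¹ := by rw [hb]; group
    _ = y * (x * m * x⁻¹) * y⁻¹ := by rw [hm.mul_inv_cancel]

theorem conj_sq_of_braid {x y : G} (hb : x * y * x = y * x * y) :
    x * (y * x ^ 2 * y⁻¹) * x⁻¹ = y ^ 2 := by
  have hxy : (x * y) * x * (x * y)⁻¹ = y := by
    rw [hb]; group
  calc x * (y * x ^ 2 * y⁻¹) * x⁻¹ = (x * y) * x ^ 2 * (x * y)⁻¹ := by group
    _ = y ^ 2 := by rw [← conj_pow, hxy]

theorem Commute.conj_conj {g h : G} (hgh : Commute g h) (m : G) :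
    g * (h * m * h⁻¹) * g⁻¹ = h * (g * m * g⁻¹) * h⁻¹ := by
  calc g * (h * m * h⁻¹) * g⁻¹ = (g * h) * m * (g * h)⁻¹ := by group
    _ = (h * g) * m * (h * g)⁻¹ := by rw [hgh.eq]
    _ = h * (g * m * g⁻¹) * h⁻¹ := by group

end GroupLemmas

section LowerCentralSeries

open Subgroup

variable {G : Type*} [Group G]

theorem commutatorElement_mul_left_of_mem_center {c : G} (hc : c ∈ center G) (x y : G) :
    ⁅c * x, y⁆ = ⁅x, y⁆ := by
  have hc' (z : G) : Commute c z := (mem_center_iff.mp hc z).symm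
  rw [commutatorElement_mul_left_eq_conj_mul, (hc' _).mul_inv_cancel,
    commutatorElement_eq_one_iff_commute.mpr (hc' y), mul_one]

theorem commutatorElement_mul_mul_of_mem_center {c d : G} (hc : c ∈ center G)
    (hd : d ∈ center G) (x y : G) : ⁅c * x, d * y⁆ = ⁅x, y⁆ := by
  rw [commutatorElement_mul_left_of_mem_center hc, ← commutatorElement_inv,
    commutatorElement_mul_left_of_mem_center hd, commutatorElement_inv]

theorem mk_mem_center_of_mem_lowerCentralSeries_one {c : G}
    (hc : c ∈ (⊤ : Subgroup G).lowerCentralSeries 1) :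
    (c : G ⧸ (⊤ : Subgroup G).lowerCentralSeries 2) ∈ center _ := by
  rw [mem_center_iff]
  intro g
  induction g using QuotientGroup.induction_on with | H g => ?_
  refine (commutatorElement_eq_one_iff_mul_comm.mp ?_).symm
  rw [← QuotientGroup.mk'_apply, ← QuotientGroup.mk'_apply, ← map_commutatorElement,
    QuotientGroup.mk'_apply, QuotientGroup.eq_one_iff]
  exact commutator_mem_commutator hc (mem_top g)

theorem commutatorElement_conj_conj_mul_inv_mem (w x v y : G) :
    ⁅w * x * w⁻¹, v * y * v⁻¹⁆ * ⁅x, y⁆⁻¹ ∈ (⊤ : Subgroup G).lowerCentralSeries 2 := by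
  have hconj (g h : G) : g * h * g⁻¹ = ⁅g, h⁆ * h := by
    rw [commutatorElement_def]; group
  have hmem (g h : G) : ⁅g, h⁆ ∈ (⊤ : Subgroup G).lowerCentralSeries 1 :=
    commutator_mem_commutator (mem_top g) (mem_top h)
  rw [← div_eq_mul_inv, ← QuotientGroup.eq_iff_div_mem, hconj, hconj]
  simp only [← QuotientGroup.mk'_apply, map_commutatorElement, map_mul]
  exact commutatorElement_mul_mul_of_mem_center
    (mk_mem_center_of_mem_lowerCentralSeries_one (hmem w x))
    (mk_mem_center_of_mem_lowerCentralSeries_one (hmem v y)) _ _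

end LowerCentralSeries

namespace Subgroup

variable {G : Type*} [Group G] (N : Subgroup G)

def IsConjBy (x y : G) : Prop := ∃ w ∈ N, w * x * w⁻¹ = y

variable {N}

namespace IsConjBy

theorem refl (x : G) : N.IsConjBy x x := ⟨1, N.one_mem, by group⟩

theorem symm {x y : G} (h : N.IsConjBy x y) : N.IsConjBy y x := by
  obtain ⟨w, hw, rfl⟩ := h
  exact ⟨w⁻¹, N.inv_mem hw, by group⟩

theorem trans {x y z : G} (hxy : N.IsConjBy x y) (hyz : N.IsConjBy y z) : N.IsConjBy x z := by
  obtain ⟨w, hw, rfl⟩ := hxy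
  obtain ⟨v, hv, rfl⟩ := hyz
  exact ⟨v * w, N.mul_mem hv hw, by group⟩

theorem conj [N.Normal] {x y : G} (h : N.IsConjBy x y) (g : G) :
    N.IsConjBy (g * x * g⁻¹) (g * y * g⁻¹) := by
  obtain ⟨w, hw, rfl⟩ := h
  exact ⟨g * w * g⁻¹, Normal.conj_mem ‹_› w hw g, by group⟩

end IsConjBy

theorem isConjBy_conj_of_sq_mem {g x y : G} (hg : g ^ 2 ∈ N)
    (h : g * x * g⁻¹ = y ∨ g * y * g⁻¹ = x) : N.IsConjBy y (g * x * g⁻¹) := by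
  rcases h with rfl | rfl
  · exact .refl _
  · exact ⟨g ^ 2, hg, by rw [sq]; group⟩

end Subgroup

namespace BraidProj

variable {n : ℕ}

lemma braidGen_of {a : ℕ} (ha : a < n - 1) : braidGen n a = PresentedGroup.of ⟨a, ha⟩ :=
  dif_pos ha

lemma braidGen_commute {a b : ℕ} (h : a + 2 ≤ b) : Commute (braidGen n a) (braidGen n b) := by
  by_cases hb : b < n - 1
  · rw [braidGen_of (by omega), braidGen_of hb]
    refine PresentedGroup.mk_eq_mk_of_mul_inv_mem (Or.inl ⟨⟨a, by omega⟩, ⟨b, hb⟩, h, ?_⟩)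
    rw [σrel1, mul_inv_rev, ← mul_assoc]
  · rw [show braidGen n b = 1 from dif_neg hb]
    exact Commute.one_right _

lemma braidGen_braid {a : ℕ} (h : a + 2 < n) :
    braidGen n a * braidGen n (a + 1) * braidGen n a =
      braidGen n (a + 1) * braidGen n a * braidGen n (a + 1) := by
  rw [braidGen_of (by omega), braidGen_of (by omega)]
  exact PresentedGroup.mk_eq_mk_of_mul_inv_mem (Or.inr ⟨_, _, rfl, rfl⟩)

lemma braidπ_braidGen {a : ℕ} (ha : a < n - 1) :
    braidπ n (braidGen n a) = permGen n ⟨a, ha⟩ := by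
  rw [braidGen_of ha]
  exact PresentedGroup.toGroup.of _

lemma braidGen_sq_mem_P (a : ℕ) : braidGen n a ^ 2 ∈ P n := by
  rw [P, MonoidHom.mem_ker]
  by_cases ha : a < n - 1
  · rw [map_pow, braidπ_braidGen ha, permGen, sq, Equiv.swap_mul_self]
  · rw [braidGen, dif_neg ha, one_pow, map_one]

lemma permGen_apply_val (k : Fin (n - 1)) (t : Fin n) :
    (permGen n k t : ℕ) = Equiv.swap (k : ℕ) (k + 1) t :=
  (Fin.val_injective.swap_apply _ _ _).symm

lemma braidChain_self (i : ℕ) : braidChain n (i + 1) (i + 1 + 1) = 1 := by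
  simp [braidChain]

lemma braidChain_succ {i j : ℕ} (h : i < j) :
    braidChain n (i + 1) (j + 1 + 1) = braidGen n j * braidChain n (i + 1) (j + 1) := by
  rw [braidChain, braidChain, show j + 1 + 1 - 1 - (i + 1) = j - 1 - i + 1 by omega,
    show j + 1 - 1 - (i + 1) = j - 1 - i by omega,
    List.range_succ_eq_map, List.map_cons, List.prod_cons, List.map_map]
  congr 2
  refine List.map_congr_left fun t _ => ?_
  simp only [Function.comp_apply]
  congr 1
  omega

/-- `A_{i+1,j+1}` for `0`-based strings `i, j`, with the convention `A_{j,i} = A_{i,j}`. -/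
def pureA (n i j : ℕ) : B n := braidAsym n (i + 1) (j + 1)

lemma pureA_comm (i j : ℕ) : pureA n i j = pureA n j i := by
  unfold pureA braidAsym
  rcases Nat.lt_trichotomy i j with h | rfl | h
  · rw [if_pos (by omega), if_neg (by omega)]
  · rfl
  · rw [if_neg (by omega), if_pos (by omega)]

lemma pureA_of_le {i j : ℕ} (h : i ≤ j) : pureA n i j = braidA n (i + 1) (j + 1) :=
  if_pos (by omega)

lemma pureA_mem_P (i j : ℕ) : pureA n i j ∈ P n := by
  unfold pureA braidAsym braidA
  split <;> exact (P_normal n).conj_mem _ (braidGen_sq_mem_P _) _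

lemma pureA_succ_self (i : ℕ) : pureA n i (i + 1) = braidGen n i ^ 2 := by
  rw [pureA_of_le (by omega), braidA, braidChain_self, Nat.add_sub_cancel, one_mul, inv_one,
    mul_one]

lemma pureA_succ_right {i j : ℕ} (h : i < j) :
    pureA n i (j + 1) = braidGen n j * pureA n i j * (braidGen n j)⁻¹ := by
  rw [pureA_of_le (by omega), pureA_of_le h.le, braidA, braidA, braidChain_succ h]
  group

lemma commute_pureA {x : B n} {i j : ℕ} (hij : i < j)
    (h : ∀ t, i ≤ t → t < j → Commute x (braidGen n t)) : Commute x (pureA n i j) := by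
  induction j, hij using Nat.le_induction with
  | base => rw [pureA_succ_self]; exact (h i le_rfl (by omega)).pow_right 2
  | succ j hij ih =>
    rw [pureA_succ_right hij]
    have hj := h j (by omega) (by omega)
    exact (hj.mul_right (ih fun t h1 h2 => h t h1 (by omega))).mul_right hj.inv_right

lemma braidGen_commute_pureA_of_far {a i j : ℕ} (hij : i < j) (h : j < a ∨ a + 1 < i) :
    Commute (braidGen n a) (pureA n i j) :=
  commute_pureA hij fun t _ _ => by
    rcases h with h | h
    · exact (braidGen_commute (by omega)).symm
    · exact braidGen_commute (by omega)

lemma braidGen_commute_pureA_of_lt_of_lt {a i j : ℕ} (hi : i < a) (hj : a + 1 < j)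
    (hjn : j < n) : Commute (braidGen n a) (pureA n i j) := by
  induction j, hj using Nat.le_induction with
  | base =>
    rw [pureA_succ_right (by omega), pureA_succ_right hi]
    exact commute_conj_of_braid (braidGen_braid (by omega))
      (braidGen_commute_pureA_of_far hi (Or.inl (by omega)))
  | succ j hj ih =>
    rw [pureA_succ_right (by omega)]
    have hc : Commute (braidGen n a) (braidGen n j) := braidGen_commute (by omega)
    exact (hc.mul_right (ih (by omega))).mul_right hc.inv_right

lemma braidGen_conj_pureA_left {i j : ℕ} (hij : i + 1 < j) (hjn : j < n) :
    braidGen n i * pureA n i j * (braidGen n i)⁻¹ = pureA n (i + 1) j := by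
  induction j, hij using Nat.le_induction with
  | base =>
    rw [pureA_succ_right (by omega), pureA_succ_self, pureA_succ_self]
    exact conj_sq_of_braid (braidGen_braid (by omega))
  | succ j hj ih =>
    rw [pureA_succ_right (by omega), pureA_succ_right hj,
      (braidGen_commute (by omega)).conj_conj, ih (by omega)]

lemma braidGen_conj_pureA_or {a i j : ℕ} (hij : i < j) (hjn : j < n) :
    braidGen n a * pureA n i j * (braidGen n a)⁻¹ =
        pureA n (Equiv.swap a (a + 1) i) (Equiv.swap a (a + 1) j) ∨
      braidGen n a * pureA n (Equiv.swap a (a + 1) i) (Equiv.swap a (a + 1) j) *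
        (braidGen n a)⁻¹ = pureA n i j := by
  have fix (t : ℕ) (h₁ : t ≠ a) (h₂ : t ≠ a + 1) : Equiv.swap a (a + 1) t = t :=
    Equiv.swap_apply_of_ne_of_ne h₁ h₂
  have hcomm (hc : Commute (braidGen n a) (pureA n i j)) (hi₁ : i ≠ a) (hi₂ : i ≠ a + 1)
      (hj₁ : j ≠ a) (hj₂ : j ≠ a + 1) :
      braidGen n a * pureA n i j * (braidGen n a)⁻¹ =
        pureA n (Equiv.swap a (a + 1) i) (Equiv.swap a (a + 1) j) := by
    rw [fix i hi₁ hi₂, fix j hj₁ hj₂, hc.mul_inv_cancel]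
  rcases lt_trichotomy i a with hi | rfl | hi
  · rcases lt_trichotomy j a with hj | rfl | hj
    · exact .inl (hcomm (braidGen_commute_pureA_of_far hij (.inl hj)) hi.ne (by omega) hj.ne
        (by omega))
    · left
      rw [fix i hi.ne (by omega), Equiv.swap_apply_left, pureA_succ_right hi]
    · rcases (Nat.succ_le_of_lt hj).eq_or_lt with rfl | hj
      · right
        rw [fix i hi.ne (by omega), Equiv.swap_apply_right, pureA_succ_right hi]
      · exact .inl (hcomm (braidGen_commute_pureA_of_lt_of_lt hi hj hjn) hi.ne (by omega)
          (by omega) (by omega))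
  · left
    rw [Equiv.swap_apply_left]
    rcases (Nat.succ_le_of_lt hij).eq_or_lt with rfl | hj
    · rw [Equiv.swap_apply_right, pureA_comm (i + 1), pureA_succ_self,
        (Commute.self_pow _ 2).mul_inv_cancel]
    · rw [fix j (by omega) (by omega), braidGen_conj_pureA_left hj hjn]
  · rcases (Nat.succ_le_of_lt hi).eq_or_lt with rfl | hi
    · right
      rw [Equiv.swap_apply_right, fix j (by omega) (by omega), braidGen_conj_pureA_left hij hjn]
    · exact .inl (hcomm (braidGen_commute_pureA_of_far hij (.inr hi)) (by omega) (by omega)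
        (by omega) (by omega))

lemma isConjBy_braidGen_conj_pureA {a i j : ℕ} (hij : i ≠ j) (hin : i < n) (hjn : j < n) :
    (P n).IsConjBy (pureA n (Equiv.swap a (a + 1) i) (Equiv.swap a (a + 1) j))
      (braidGen n a * pureA n i j * (braidGen n a)⁻¹) := by
  rcases hij.lt_or_gt with h | h
  · exact Subgroup.isConjBy_conj_of_sq_mem (braidGen_sq_mem_P a) (braidGen_conj_pureA_or h hjn)
  · rw [pureA_comm i, pureA_comm (Equiv.swap a (a + 1) i)]
    exact Subgroup.isConjBy_conj_of_sq_mem (braidGen_sq_mem_P a) (braidGen_conj_pureA_or h hin)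

theorem isConjBy_conj_pureA (α : B n) {i j : Fin n} (hij : i ≠ j) :
    (P n).IsConjBy (pureA n (braidπ n α i) (braidπ n α j)) (α * pureA n i j * α⁻¹) := by
  have hα : α ∈ Subgroup.closure (Set.range (PresentedGroup.of (rels := braidRels n))) := by
    simp
  induction hα using Subgroup.closure_induction generalizing i j with
  | mem _ hx =>
    obtain ⟨k, rfl⟩ := hx
    have hk : (PresentedGroup.of k : B n) = braidGen n k := (braidGen_of k.isLt).symm
    have hπ : braidπ n (PresentedGroup.of k) = permGen n k := PresentedGroup.toGroup.of _
    rw [hπ, permGen_apply_val, permGen_apply_val, hk]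
    exact isConjBy_braidGen_conj_pureA (Fin.val_injective.ne hij) i.isLt j.isLt
  | one => simpa using Subgroup.IsConjBy.refl _
  | mul x y _ _ hx hy =>
    have h := (hx ((braidπ n y).injective.ne hij)).trans ((hy hij).conj x)
    convert h using 1
    · simp only [map_mul, Equiv.Perm.mul_apply]
    · group
  | inv x _ hx =>
    have h := ((hx ((braidπ n x)⁻¹.injective.ne hij)).conj x⁻¹).symm
    simp only [← Equiv.Perm.mul_apply, mul_inv_cancel, Equiv.Perm.one_apply] at h
    convert h using 1
    rw [map_inv]
    group

end BraidProj

open scoped commutatorElement in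
open BraidProj in
/-- Strings are `0`-based (`i : Fin n` is the string `i+1` of the paper). The paper multiplies
permutations left-to-right, whereas `Equiv.Perm` composes right-to-left, so the paper's `σ(α)⁻¹`,
as a function on the strings, is `braidπ n α`. -/
theorem conjugation_of_commutator_general (n : ℕ) (α : B n)
    (π : Equiv.Perm (Fin n)) (hπ : π = braidπ n α)
    (i j r s : Fin n) (hij : i < j) (hrs : r < s) :
    α * ⁅braidA n ((i : ℕ) + 1) ((j : ℕ) + 1),
          braidA n ((r : ℕ) + 1) ((s : ℕ) + 1)⁆ * α⁻¹ *
      (⁅braidAsym n ((π i : ℕ) + 1) ((π j : ℕ) + 1),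
          braidAsym n ((π r : ℕ) + 1) ((π s : ℕ) + 1)⁆)⁻¹ ∈ gammaB n 3 := by
  obtain ⟨w, hw, hX⟩ := isConjBy_conj_pureA α hij.ne
  obtain ⟨v, hv, hY⟩ := isConjBy_conj_pureA α hrs.ne
  rw [← hπ] at hX hY
  let pureA' (x y : Fin n) : P n := ⟨pureA n x y, pureA_mem_P _ _⟩
  refine ⟨_, commutatorElement_conj_conj_mul_inv_mem
    ⟨w, hw⟩ (pureA' (π i) (π j)) ⟨v, hv⟩ (pureA' (π r) (π s)), ?_⟩
  simp only [map_mul, map_inv, map_commutatorElement, Subgroup.coe_subtype]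
  rw [← pureA_of_le hij.le, ← pureA_of_le hrs.le, conjugate_commutatorElement, ← hX, ← hY]
  rfl

open scoped commutatorElement in
open BraidProj in
/-- For `α ∈ B_n` with `π = σ(α)⁻¹`, conjugation by `α` sends the commutator
`[A_{i,j}, A_{r,s}]` to `[A_{π(i),π(j)}, A_{π(r),π(s)}]` modulo `Γ_3(P_n)`.
Indices of strings are `0`-based (`i : Fin n` is the string `i+1` of the
paper).  Note: the paper multiplies permutations left-to-right
(`(α·β)(i) = β(α(i))`), whereas Mathlib's `Equiv.Perm` composes functions
right-to-left; consequently the permutation `σ(α)⁻¹` of the paper, viewed as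
a function on the strings, is exactly the function `braidπ n α` below. -/
theorem conjugation_of_commutator (n : ℕ) (hn : 3 ≤ n) (α : B n)
    (π : Equiv.Perm (Fin n)) (hπ : π = braidπ n α)
    (i j r s : Fin n) (hij : i < j) (hrs : r < s) :
    α * ⁅braidA n ((i : ℕ) + 1) ((j : ℕ) + 1),
          braidA n ((r : ℕ) + 1) ((s : ℕ) + 1)⁆ * α⁻¹ *
      (⁅braidAsym n ((π i : ℕ) + 1) ((π j : ℕ) + 1),
          braidAsym n ((π r : ℕ) + 1) ((π s : ℕ) + 1)⁆)⁻¹ ∈ gammaB n 3 :=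
  conjugation_of_commutator_general n α π hπ i j r s hij hrs
end

section
/- Let n ≥ 4. For α ∈ B_n, the following are equivalent: (i) α ∈ P_n; (ii) for every g ∈ Γ_2(P_n), the commutator [α, g] = αgα^{-1}g^{-1} belongs to Γ_3(P_n). In other words, the conjugation action of B_n/Γ_3(P_n) on Γ_2(P_n)/Γ_3(P_n) factors through S_n, and the resulting action of S_n is faithful for n ≥ 4. -/
/-!
Reduce the Burau representation modulo `(t - 1)³`: over `ℤ[ε]/(ε³)` with `t = 1 + ε` it becomes a
representation `ρ` of `B_n` whose reduction modulo `ε` is the permutation representation. Hence `ρ`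
sends `P_n` to the units `≡ 1 mod ε`, sends `Γ₂(P_n)` to the units `≡ 1 mod ε²` and kills
`Γ₃(P_n)`. For `g ∈ Γ₂(P_n)`, conjugating `g` by `β` permutes the rows and columns of the
`ε²`-coefficient of `ρ g` by `σ(β)`. So if `[α, g] ∈ Γ₃(P_n)` for all `g ∈ Γ₂(P_n)`, that
coefficient is invariant under `σ(α)` for every such `g`. Now take for `g` the conjugates of
`[A₁₂, A₂₃]`, whose `ε²`-coefficient lives in the top-left `3 × 3` block and has a nonzero entry in
row `1`. If `σ(α) ≠ 1` and `n ≥ 4`, some conjugate of `σ(α)` sends `1` to `4`, which contradicts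
this invariance.
-/

namespace BraidProj

open scoped commutatorElement

/-- `ℤ[ε]/(ε³)`: the element `c0 + c1 ε + c2 ε²`. -/
@[ext]
structure Jet where
  c0 : ℤ
  c1 : ℤ
  c2 : ℤ
  deriving DecidableEq

namespace Jet

instance : Zero Jet := ⟨⟨0, 0, 0⟩⟩
instance : One Jet := ⟨⟨1, 0, 0⟩⟩
instance : Add Jet := ⟨fun x y => ⟨x.c0 + y.c0, x.c1 + y.c1, x.c2 + y.c2⟩⟩
instance : Neg Jet := ⟨fun x => ⟨-x.c0, -x.c1, -x.c2⟩⟩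
instance : Mul Jet :=
  ⟨fun x y => ⟨x.c0 * y.c0, x.c0 * y.c1 + x.c1 * y.c0, x.c0 * y.c2 + x.c1 * y.c1 + x.c2 * y.c0⟩⟩

@[simp] lemma zero_c0 : (0 : Jet).c0 = 0 := rfl
@[simp] lemma zero_c1 : (0 : Jet).c1 = 0 := rfl
@[simp] lemma zero_c2 : (0 : Jet).c2 = 0 := rfl
@[simp] lemma one_c0 : (1 : Jet).c0 = 1 := rfl
@[simp] lemma one_c1 : (1 : Jet).c1 = 0 := rfl
@[simp] lemma one_c2 : (1 : Jet).c2 = 0 := rfl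
@[simp] lemma add_c0 (x y : Jet) : (x + y).c0 = x.c0 + y.c0 := rfl
@[simp] lemma add_c1 (x y : Jet) : (x + y).c1 = x.c1 + y.c1 := rfl
@[simp] lemma add_c2 (x y : Jet) : (x + y).c2 = x.c2 + y.c2 := rfl
@[simp] lemma neg_c0 (x : Jet) : (-x).c0 = -x.c0 := rfl
@[simp] lemma neg_c1 (x : Jet) : (-x).c1 = -x.c1 := rfl
@[simp] lemma neg_c2 (x : Jet) : (-x).c2 = -x.c2 := rfl
@[simp] lemma mul_c0 (x y : Jet) : (x * y).c0 = x.c0 * y.c0 := rfl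
@[simp] lemma mul_c1 (x y : Jet) : (x * y).c1 = x.c0 * y.c1 + x.c1 * y.c0 := rfl
@[simp] lemma mul_c2 (x y : Jet) :
    (x * y).c2 = x.c0 * y.c2 + x.c1 * y.c1 + x.c2 * y.c0 := rfl

instance : CommRing Jet where
  add_assoc x y z := by ext <;> simp [add_assoc]
  zero_add x := by ext <;> simp
  add_zero x := by ext <;> simp
  add_comm x y := by ext <;> simp [add_comm]
  neg_add_cancel x := by ext <;> simp
  mul_assoc x y z := by ext <;> simp <;> ring
  one_mul x := by ext <;> simp
  mul_one x := by ext <;> simp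
  left_distrib x y z := by ext <;> simp <;> ring
  right_distrib x y z := by ext <;> simp <;> ring
  mul_comm x y := by ext <;> simp <;> ring
  zero_mul x := by ext <;> simp
  mul_zero x := by ext <;> simp
  nsmul := nsmulRec
  zsmul := zsmulRec

def c0Hom : Jet →+* ℤ where
  toFun := c0
  map_one' := rfl
  map_mul' _ _ := rfl
  map_zero' := rfl
  map_add' _ _ := rfl

@[simp] lemma coe_c0Hom : ⇑c0Hom = c0 := rfl

def c1Hom : Jet →+ ℤ where
  toFun := c1
  map_zero' := rfl
  map_add' _ _ := rfl

def c2Hom : Jet →+ ℤ where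
  toFun := c2
  map_zero' := rfl
  map_add' _ _ := rfl

@[simp] lemma sum_c1 {α : Type*} (s : Finset α) (x : α → Jet) :
    (∑ a ∈ s, x a).c1 = ∑ a ∈ s, (x a).c1 :=
  map_sum c1Hom x s

@[simp] lemma sum_c2 {α : Type*} (s : Finset α) (x : α → Jet) :
    (∑ a ∈ s, x a).c2 = ∑ a ∈ s, (x a).c2 :=
  map_sum c2Hom x s

end Jet

section JetMatrix

variable {ι : Type*}

lemma map_c0_mul [Fintype ι] (M N : Matrix ι ι Jet) :
    (M * N).map Jet.c0 = M.map Jet.c0 * N.map Jet.c0 :=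
  Matrix.map_mul (f := Jet.c0Hom)

lemma map_c1_mul [Fintype ι] (M N : Matrix ι ι Jet) :
    (M * N).map Jet.c1 = M.map Jet.c0 * N.map Jet.c1 + M.map Jet.c1 * N.map Jet.c0 := by
  ext k l
  simp [Matrix.mul_apply, Finset.sum_add_distrib]

lemma map_c2_mul [Fintype ι] (M N : Matrix ι ι Jet) :
    (M * N).map Jet.c2 =
      M.map Jet.c0 * N.map Jet.c2 + M.map Jet.c1 * N.map Jet.c1 + M.map Jet.c2 * N.map Jet.c0 := by
  ext k l
  simp [Matrix.mul_apply, Finset.sum_add_distrib]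

variable [DecidableEq ι]

@[simp] lemma map_c1_one : (1 : Matrix ι ι Jet).map Jet.c1 = 0 := by
  ext k l
  simp [Matrix.one_apply, apply_ite Jet.c1]

@[simp] lemma map_c2_one : (1 : Matrix ι ι Jet).map Jet.c2 = 0 := by
  ext k l
  simp [Matrix.one_apply, apply_ite Jet.c2]

end JetMatrix

lemma matrix_jet_ext {ι : Type*} {M N : Matrix ι ι Jet} (h0 : M.map Jet.c0 = N.map Jet.c0)
    (h1 : M.map Jet.c1 = N.map Jet.c1) (h2 : M.map Jet.c2 = N.map Jet.c2) : M = N := by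
  ext k l
  · exact congrFun (congrFun h0 k) l
  · exact congrFun (congrFun h1 k) l
  · exact congrFun (congrFun h2 k) l

section Embedding

open scoped Matrix

variable {R : Type*} [CommRing R] {ι κ μ : Type*}

variable (R) in
def inclMatrix [DecidableEq κ] (f : ι ↪ κ) : Matrix κ ι R :=
  Matrix.of fun k a => if f a = k then 1 else 0

@[simp] lemma inclMatrix_apply [DecidableEq κ] (f : ι ↪ κ) (k : κ) (a : ι) :
    inclMatrix R f k a = if f a = k then 1 else 0 := rfl

lemma inclMatrix_transpose_mul_self [Fintype κ] [DecidableEq ι] [DecidableEq κ] (f : ι ↪ κ) :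
    (inclMatrix R f)ᵀ * inclMatrix R f = 1 := by
  ext a b
  simp [Matrix.mul_apply, Matrix.one_apply, f.injective.eq_iff, eq_comm]

lemma inclMatrix_trans [Fintype κ] [DecidableEq κ] [DecidableEq μ] (f : ι ↪ κ) (g : κ ↪ μ) :
    inclMatrix R (f.trans g) = inclMatrix R g * inclMatrix R f := by
  ext m a
  simp [Matrix.mul_apply]

lemma inclMatrix_transpose_mul_of_disjoint [Fintype κ] [DecidableEq κ] {f : ι ↪ κ} {g : μ ↪ κ}
    (h : Disjoint (Set.range f) (Set.range g)) : (inclMatrix R f)ᵀ * inclMatrix R g = 0 := by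
  ext a b
  have : f a ≠ g b := fun hab => Set.disjoint_left.mp h ⟨a, rfl⟩ ⟨b, hab.symm⟩
  simp [Matrix.mul_apply, this]

variable [Fintype ι] [DecidableEq ι] [DecidableEq κ]

/-- The matrix acting as `X` on the coordinates `f a` and as the identity on the others. -/
def embedMatrix (f : ι ↪ κ) (X : Matrix ι ι R) : Matrix κ κ R :=
  1 + inclMatrix R f * (X - 1) * (inclMatrix R f)ᵀ

lemma embedMatrix_one (f : ι ↪ κ) : embedMatrix f (1 : Matrix ι ι R) = 1 := by
  simp [embedMatrix]

lemma embedMatrix_mul [Fintype κ] (f : ι ↪ κ) (X Y : Matrix ι ι R) :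
    embedMatrix f (X * Y) = embedMatrix f X * embedMatrix f Y := by
  have hF := inclMatrix_transpose_mul_self (R := R) f
  unfold embedMatrix
  set F := inclMatrix R f
  have key : F * ((X - 1) * (Y - 1)) * Fᵀ = F * (X - 1) * Fᵀ * (F * (Y - 1) * Fᵀ) := by
    simp only [Matrix.mul_assoc]
    rw [← Matrix.mul_assoc Fᵀ F, hF, Matrix.one_mul]
  have hXY : X * Y - 1 = (X - 1) + (Y - 1) + (X - 1) * (Y - 1) := by noncomm_ring
  rw [hXY, Matrix.mul_add, Matrix.mul_add, Matrix.add_mul, Matrix.add_mul, key]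
  generalize F * (X - 1) * Fᵀ = P
  generalize F * (Y - 1) * Fᵀ = Q
  noncomm_ring

def embedHom [Fintype κ] (f : ι ↪ κ) : Matrix ι ι R →* Matrix κ κ R where
  toFun := embedMatrix f
  map_one' := embedMatrix_one f
  map_mul' := embedMatrix_mul f

lemma embedMatrix_trans [Fintype κ] [DecidableEq μ] (f : ι ↪ κ) (g : κ ↪ μ) (X : Matrix ι ι R) :
    embedMatrix (f.trans g) X = embedMatrix g (embedMatrix f X) := by
  simp only [embedMatrix, inclMatrix_trans, add_sub_cancel_left, Matrix.transpose_mul,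
    Matrix.mul_assoc]

lemma commute_embedMatrix_of_disjoint [Fintype κ] [Fintype μ] [DecidableEq μ] {f : ι ↪ κ}
    {g : μ ↪ κ} (h : Disjoint (Set.range f) (Set.range g)) (X : Matrix ι ι R)
    (Y : Matrix μ μ R) : Commute (embedMatrix f X) (embedMatrix g Y) := by
  have hfg := inclMatrix_transpose_mul_of_disjoint (R := R) h
  have hgf := inclMatrix_transpose_mul_of_disjoint (R := R) h.symm
  unfold embedMatrix
  set F := inclMatrix R f
  set G := inclMatrix R g
  have hPQ : F * (X - 1) * Fᵀ * (G * (Y - 1) * Gᵀ) = 0 := by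
    simp only [Matrix.mul_assoc]
    rw [← Matrix.mul_assoc Fᵀ G, hfg]
    simp
  have hQP : G * (Y - 1) * Gᵀ * (F * (X - 1) * Fᵀ) = 0 := by
    simp only [Matrix.mul_assoc]
    rw [← Matrix.mul_assoc Gᵀ F, hgf]
    simp
  generalize F * (X - 1) * Fᵀ = P at hPQ hQP
  generalize G * (Y - 1) * Gᵀ = Q at hPQ hQP
  simp only [Commute, SemiconjBy, add_mul, mul_add, one_mul, mul_one, hPQ, hQP]
  abel

lemma embedMatrix_apply_image (f : ι ↪ κ) (X : Matrix ι ι R) (a b : ι) :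
    embedMatrix f X (f a) (f b) = X a b := by
  simp [embedMatrix, Matrix.mul_apply, Matrix.one_apply, f.injective.eq_iff, Matrix.sub_apply]

lemma embedMatrix_apply_of_notMem_range_left (f : ι ↪ κ) (X : Matrix ι ι R) {k : κ}
    (hk : k ∉ Set.range f) (l : κ) : embedMatrix f X k l = (1 : Matrix κ κ R) k l := by
  have : ∀ a, f a ≠ k := fun a h => hk ⟨a, h⟩
  simp [embedMatrix, Matrix.mul_apply, this]

lemma embedMatrix_apply_of_notMem_range_right (f : ι ↪ κ) (X : Matrix ι ι R) (k : κ) {l : κ}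
    (hl : l ∉ Set.range f) : embedMatrix f X k l = (1 : Matrix κ κ R) k l := by
  have : ∀ a, f a ≠ l := fun a h => hl ⟨a, h⟩
  simp [embedMatrix, Matrix.mul_apply, this]

lemma map_embedMatrix {S : Type*} [CommRing S] (φ : R →+* S) (f : ι ↪ κ) (X : Matrix ι ι R) :
    (embedMatrix f X).map φ = embedMatrix f (X.map φ) := by
  have hF : (inclMatrix R f).map φ = inclMatrix S f := by
    ext k a
    simp [apply_ite φ]
  rw [embedMatrix, embedMatrix, Matrix.map_add _ (map_add φ), Matrix.map_mul, Matrix.map_mul,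
    Matrix.map_sub _ (map_sub φ), Matrix.transpose_map, hF]
  simp only [Matrix.map_one _ (map_zero φ) (map_one φ)]

lemma embedMatrix_permMatrix (f : ι ↪ κ) (σ : Equiv.Perm ι) :
    embedMatrix f (σ.permMatrix R) = (σ.viaFintypeEmbedding f).permMatrix R := by
  ext k l
  by_cases hk : k ∈ Set.range f
  · obtain ⟨a, rfl⟩ := hk
    by_cases hl : l ∈ Set.range f
    · obtain ⟨b, rfl⟩ := hl
      simp [embedMatrix_apply_image, PEquiv.toMatrix_apply, f.injective.eq_iff]
    · have : f (σ a) ≠ l := fun h => hl ⟨_, h⟩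
      simp [embedMatrix_apply_of_notMem_range_right _ _ _ hl, PEquiv.toMatrix_apply, this,
        show f a ≠ l from fun h => hl ⟨_, h⟩]
  · simp [embedMatrix_apply_of_notMem_range_left _ _ hk, PEquiv.toMatrix_apply,
      Matrix.one_apply, Equiv.Perm.viaFintypeEmbedding_apply_notMem_range _ _ hk]

end Embedding

lemma viaFintypeEmbedding_swap {ι κ : Type*} [Fintype ι] [DecidableEq ι] [DecidableEq κ]
    (f : ι ↪ κ) (a b : ι) :
    (Equiv.swap a b).viaFintypeEmbedding f = Equiv.swap (f a) (f b) := by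
  ext k
  by_cases hk : k ∈ Set.range f
  · obtain ⟨c, rfl⟩ := hk
    rw [Equiv.Perm.viaFintypeEmbedding_apply_image, f.injective.swap_apply]
  · have hka : k ≠ f a := fun h => hk ⟨a, h.symm⟩
    have hkb : k ≠ f b := fun h => hk ⟨b, h.symm⟩
    rw [Equiv.Perm.viaFintypeEmbedding_apply_notMem_range _ _ hk,
      Equiv.swap_apply_of_ne_of_ne hka hkb]

def blockEmb (i : ℕ) {m n : ℕ} (h : i + m ≤ n) : Fin m ↪ Fin n where
  toFun k := ⟨i + k, by omega⟩
  inj' k l hkl := Fin.ext (by simpa using congrArg Fin.val hkl)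

@[simp] lemma blockEmb_apply (i : ℕ) {m n : ℕ} (h : i + m ≤ n) (k : Fin m) :
    blockEmb i h k = ⟨i + k, by omega⟩ := rfl

lemma blockEmb_trans {i j m p n : ℕ} (hj : j + m ≤ p) (hi : i + p ≤ n) :
    (blockEmb j hj).trans (blockEmb i hi) = blockEmb (i + j) (by omega) := by
  ext k
  simp [Nat.add_assoc]

lemma disjoint_range_blockEmb {i j m n : ℕ} (hi : i + m ≤ n) (hj : j + m ≤ n) (hij : i + m ≤ j) :
    Disjoint (Set.range (blockEmb i hi)) (Set.range (blockEmb j hj)) := by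
  rw [Set.disjoint_left]
  rintro _ ⟨a, rfl⟩ ⟨b, hb⟩
  have := congrArg Fin.val hb
  simp at this
  omega

section EmbedGL

variable {ι κ : Type*} [Fintype ι] [DecidableEq ι] [Fintype κ] [DecidableEq κ]

def embedGL (f : ι ↪ κ) : (Matrix ι ι Jet)ˣ →* (Matrix κ κ Jet)ˣ :=
  Units.map (embedHom f)

@[simp] lemma coe_embedGL (f : ι ↪ κ) (u : (Matrix ι ι Jet)ˣ) :
    (embedGL f u : Matrix κ κ Jet) = embedMatrix f u := rfl

lemma embedGL_trans {μ : Type*} [Fintype μ] [DecidableEq μ] (f : ι ↪ κ) (g : κ ↪ μ)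
    (u : (Matrix ι ι Jet)ˣ) : embedGL (f.trans g) u = embedGL g (embedGL f u) :=
  Units.ext <| by rw [coe_embedGL, coe_embedGL, coe_embedGL, embedMatrix_trans]

end EmbedGL

lemma embedGL_blockEmb_embedGL_blockEmb {i j k m p n : ℕ} (hj : j + m ≤ p) (hi : i + p ≤ n)
    (hk : k + m ≤ n) (hijk : i + j = k) (u : (Matrix (Fin m) (Fin m) Jet)ˣ) :
    embedGL (blockEmb i hi) (embedGL (blockEmb j hj) u) = embedGL (blockEmb k hk) u := by
  subst hijk
  rw [← embedGL_trans, blockEmb_trans]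

/-- The Burau matrix `[[1 - t, t], [1, 0]]` at `t = 1 + ε`, with its inverse. -/
def burau2 : (Matrix (Fin 2) (Fin 2) Jet)ˣ :=
  ⟨!![⟨0, -1, 0⟩, ⟨1, 1, 0⟩; ⟨1, 0, 0⟩, ⟨0, 0, 0⟩],
   !![⟨0, 0, 0⟩, ⟨1, 0, 0⟩; ⟨1, -1, 1⟩, ⟨0, 1, -1⟩], by decide, by decide⟩

lemma map_c0_burau2 : (burau2 : Matrix (Fin 2) (Fin 2) Jet).map Jet.c0 =
    (Equiv.swap 0 1 : Equiv.Perm (Fin 2)).permMatrix ℤ := by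
  decide

def burauA : (Matrix (Fin 3) (Fin 3) Jet)ˣ := embedGL (blockEmb 0 (by omega)) burau2

def burauB : (Matrix (Fin 3) (Fin 3) Jet)ˣ := embedGL (blockEmb 1 (by omega)) burau2

lemma burauA_mul_burauB_mul_burauA : burauA * burauB * burauA = burauB * burauA * burauB :=
  Units.ext (by decide)

def burauGen (n : ℕ) (i : Fin (n - 1)) : (Matrix (Fin n) (Fin n) Jet)ˣ :=
  embedGL (blockEmb i (by omega)) burau2

lemma burauGen_eq_embedGL_burauA {n : ℕ} (i : Fin (n - 1)) (h : (i : ℕ) + 3 ≤ n) :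
    burauGen n i = embedGL (blockEmb i h) burauA := by
  rw [burauA, embedGL_blockEmb_embedGL_blockEmb _ _ (by omega) (Nat.add_zero _), burauGen]

lemma burauGen_eq_embedGL_burauB {n : ℕ} (i j : Fin (n - 1)) (h : (i : ℕ) + 3 ≤ n)
    (hij : (i : ℕ) + 1 = j) : burauGen n j = embedGL (blockEmb i h) burauB := by
  rw [burauB, embedGL_blockEmb_embedGL_blockEmb _ _ (by omega) hij, burauGen]

lemma burauGen_rels (n : ℕ) : ∀ r ∈ braidRels n, FreeGroup.lift (burauGen n) r = 1 := by
  rintro r (⟨i, j, hij, rfl⟩ | ⟨i, j, hij, rfl⟩) <;>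
    simp only [σrel1, σrel2, map_mul, map_inv, FreeGroup.lift_apply_of]
  · have hcomm : burauGen n i * burauGen n j = burauGen n j * burauGen n i :=
      Units.ext (commute_embedMatrix_of_disjoint (disjoint_range_blockEmb _ _ hij) _ _).eq
    rw [hcomm]
    group
  · have h : (i : ℕ) + 3 ≤ n := by omega
    rw [mul_inv_eq_one, burauGen_eq_embedGL_burauA i h, burauGen_eq_embedGL_burauB i j h hij,
      ← map_mul, ← map_mul, ← map_mul, ← map_mul, burauA_mul_burauB_mul_burauA]

def burau (n : ℕ) : B n →* (Matrix (Fin n) (Fin n) Jet)ˣ :=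
  PresentedGroup.toGroup (burauGen_rels n)

lemma burau_of (n : ℕ) (i : Fin (n - 1)) : burau n (PresentedGroup.of i) = burauGen n i :=
  PresentedGroup.toGroup.of _

lemma map_c0_burauGen (n : ℕ) (i : Fin (n - 1)) :
    (burauGen n i : Matrix (Fin n) (Fin n) Jet).map Jet.c0 = (permGen n i).permMatrix ℤ := by
  rw [burauGen, coe_embedGL, ← Jet.coe_c0Hom, map_embedMatrix, Jet.coe_c0Hom, map_c0_burau2,
    embedMatrix_permMatrix, viaFintypeEmbedding_swap]
  rfl

lemma map_c0_burau (n : ℕ) (β : B n) :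
    (burau n β : Matrix (Fin n) (Fin n) Jet).map Jet.c0 = Matrix.permMatrixHom (braidπ n β) := by
  let ρ : B n →* Matrix (Fin n) (Fin n) ℤ :=
    (Jet.c0Hom.mapMatrix : Matrix (Fin n) (Fin n) Jet →+* _).toMonoidHom.comp
      ((Units.coeHom _).comp (burau n))
  have : ρ = Matrix.permMatrixHom.comp (braidπ n) := by
    refine MonoidHom.eq_of_eqOn_dense (PresentedGroup.closure_range_of _) ?_
    rintro _ ⟨i, rfl⟩
    simp only [ρ, MonoidHom.comp_apply, Units.coeHom_apply, burau_of, RingHom.toMonoidHom_eq_coe,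
      MonoidHom.coe_coe, RingHom.mapMatrix_apply, Jet.coe_c0Hom, map_c0_burauGen]
    rw [Matrix.permMatrixHom_apply, braidπ, PresentedGroup.toGroup.of, permGen, Equiv.swap_inv]
  exact DFunLike.congr_fun this β

section Levels

variable {ι : Type*} [Fintype ι] [DecidableEq ι]

lemma map_c1_mul_of_map_c0_eq_one {M N : Matrix ι ι Jet} (hM : M.map Jet.c0 = 1)
    (hN : N.map Jet.c0 = 1) : (M * N).map Jet.c1 = M.map Jet.c1 + N.map Jet.c1 := by
  rw [map_c1_mul, hM, hN, Matrix.one_mul, Matrix.mul_one, add_comm]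

variable (ι) in
def level1 : Subgroup (Matrix ι ι Jet)ˣ :=
  (Units.map (Jet.c0Hom.mapMatrix : Matrix ι ι Jet →+* Matrix ι ι ℤ).toMonoidHom).ker

lemma mem_level1 {u : (Matrix ι ι Jet)ˣ} :
    u ∈ level1 ι ↔ (u : Matrix ι ι Jet).map Jet.c0 = 1 := by
  simp [level1, Units.ext_iff]

lemma map_c1_inv_of_mem_level1 {u : (Matrix ι ι Jet)ˣ} (hu : u ∈ level1 ι) :
    (↑u⁻¹ : Matrix ι ι Jet).map Jet.c1 = -(u : Matrix ι ι Jet).map Jet.c1 := by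
  have h := congrArg (Matrix.map · Jet.c1) u.mul_inv
  simp only [map_c1_mul_of_map_c0_eq_one (mem_level1.mp hu) (mem_level1.mp (inv_mem hu)),
    map_c1_one] at h
  exact eq_neg_of_add_eq_zero_right h

variable (ι) in
def level2 : Subgroup (Matrix ι ι Jet)ˣ where
  carrier := {u | u ∈ level1 ι ∧ (u : Matrix ι ι Jet).map Jet.c1 = 0}
  one_mem' := ⟨one_mem _, map_c1_one⟩
  mul_mem' := by
    rintro u v ⟨hu, hu1⟩ ⟨hv, hv1⟩
    refine ⟨mul_mem hu hv, ?_⟩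
    rw [Units.val_mul, map_c1_mul_of_map_c0_eq_one (mem_level1.mp hu) (mem_level1.mp hv), hu1,
      hv1, add_zero]
  inv_mem' := by
    rintro u ⟨hu, hu1⟩
    exact ⟨inv_mem hu, by rw [map_c1_inv_of_mem_level1 hu, hu1, neg_zero]⟩

lemma commutator_level1_le_level2 : ⁅level1 ι, level1 ι⁆ ≤ level2 ι := by
  rw [Subgroup.commutator_le]
  intro u hu v hv
  have c0 : ∀ w ∈ level1 ι, (w : Matrix ι ι Jet).map Jet.c0 = 1 := fun w hw => mem_level1.mp hw
  have huv : u * v ∈ level1 ι := mul_mem hu hv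
  have huvu : u * v * u⁻¹ ∈ level1 ι := mul_mem huv (inv_mem hu)
  refine ⟨commutatorElement_def u v ▸ mul_mem huvu (inv_mem hv), ?_⟩
  rw [commutatorElement_def, Units.val_mul,
    map_c1_mul_of_map_c0_eq_one (c0 _ huvu) (c0 _ (inv_mem hv)), Units.val_mul,
    map_c1_mul_of_map_c0_eq_one (c0 _ huv) (c0 _ (inv_mem hu)), Units.val_mul,
    map_c1_mul_of_map_c0_eq_one (c0 _ hu) (c0 _ hv),
    map_c1_inv_of_mem_level1 hu, map_c1_inv_of_mem_level1 hv]
  abel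

lemma commute_of_mem_level2_of_mem_level1 {u v : (Matrix ι ι Jet)ˣ} (hu : u ∈ level2 ι)
    (hv : v ∈ level1 ι) : Commute u v := by
  obtain ⟨hu0, hu1⟩ := hu
  rw [mem_level1] at hu0 hv
  refine Units.ext (matrix_jet_ext ?_ ?_ ?_)
  · rw [Units.val_mul, Units.val_mul, map_c0_mul, map_c0_mul, hu0, hv]
  · simp [map_c1_mul, hu0, hv, hu1]
  · simp [map_c2_mul, hu0, hv, hu1, add_comm]

lemma commutator_level2_level1_eq_bot : ⁅level2 ι, level1 ι⁆ = ⊥ := by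
  rw [eq_bot_iff, Subgroup.commutator_le]
  intro u hu v hv
  rw [Subgroup.mem_bot, commutatorElement_eq_one_iff_mul_comm]
  exact commute_of_mem_level2_of_mem_level1 hu hv

lemma map_c2_conj_of_mem_level2 (u : (Matrix ι ι Jet)ˣ) {x : (Matrix ι ι Jet)ˣ}
    (hx : x ∈ level2 ι) : (↑(u * x * u⁻¹) : Matrix ι ι Jet).map Jet.c2 =
      (u : Matrix ι ι Jet).map Jet.c0 * (x : Matrix ι ι Jet).map Jet.c2 *
        (↑u⁻¹ : Matrix ι ι Jet).map Jet.c0 := by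
  obtain ⟨hx0, hx1⟩ := hx
  rw [mem_level1] at hx0
  have hinv := congrArg (Matrix.map · Jet.c2) u.mul_inv
  simp only [map_c2_mul, map_c2_one] at hinv
  rw [Units.val_mul, Units.val_mul, map_c2_mul, map_c0_mul, map_c1_mul, map_c2_mul, hx0, hx1]
  set A := (u : Matrix ι ι Jet)
  set B := (↑u⁻¹ : Matrix ι ι Jet)
  calc _ = (A.map Jet.c0 * B.map Jet.c2 + A.map Jet.c1 * B.map Jet.c1 + A.map Jet.c2 * B.map Jet.c0)
        + A.map Jet.c0 * (x : Matrix ι ι Jet).map Jet.c2 * B.map Jet.c0 := by noncomm_ring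
    _ = _ := by rw [hinv, zero_add]

end Levels

section LowerCentralSeries

variable {G H : Type*} [Group G] [Group H] (f : G →* H) {K L : Subgroup H}

lemma map_lowerCentralSeries_one_le (hf : f.range ≤ K) (hKL : ⁅K, K⁆ ≤ L) :
    ((⊤ : Subgroup G).lowerCentralSeries 1).map f ≤ L := by
  rw [Subgroup.lowerCentralSeries_succ, Subgroup.lowerCentralSeries_zero, Subgroup.map_commutator,
    ← MonoidHom.range_eq_map]
  exact (Subgroup.commutator_mono hf hf).trans hKL

lemma map_lowerCentralSeries_two_eq_bot (hf : f.range ≤ K) (hKL : ⁅K, K⁆ ≤ L)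
    (hLK : ⁅L, K⁆ = ⊥) : ((⊤ : Subgroup G).lowerCentralSeries 2).map f = ⊥ := by
  rw [Subgroup.lowerCentralSeries_succ, Subgroup.map_commutator, ← MonoidHom.range_eq_map]
  exact eq_bot_mono (Subgroup.commutator_mono (map_lowerCentralSeries_one_le f hf hKL) hf) hLK

end LowerCentralSeries

section Gamma

variable {n : ℕ}

lemma burau_mem_level1 {p : B n} (hp : p ∈ P n) : burau n p ∈ level1 (Fin n) := by
  rw [mem_level1, map_c0_burau, MonoidHom.mem_ker.mp hp, map_one]

lemma range_burau_comp_subtype_le : ((burau n).comp (P n).subtype).range ≤ level1 (Fin n) := by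
  rintro _ ⟨p, rfl⟩
  exact burau_mem_level1 p.2

lemma burau_mem_level2 {g : B n} (hg : g ∈ gammaB n 2) : burau n g ∈ level2 (Fin n) := by
  obtain ⟨y, hy, rfl⟩ := hg
  exact map_lowerCentralSeries_one_le _ range_burau_comp_subtype_le commutator_level1_le_level2
    (Subgroup.mem_map_of_mem _ hy)

lemma burau_eq_one_of_mem_gammaB_three {g : B n} (hg : g ∈ gammaB n 3) : burau n g = 1 := by
  obtain ⟨y, hy, rfl⟩ := hg
  have := map_lowerCentralSeries_two_eq_bot ((burau n).comp (P n).subtype)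
    range_burau_comp_subtype_le commutator_level1_le_level2 commutator_level2_level1_eq_bot
  exact Subgroup.mem_bot.mp (this ▸ Subgroup.mem_map_of_mem _ hy)

lemma commutator_mem_gammaB_two {x y : B n} (hx : x ∈ P n) (hy : y ∈ P n) :
    ⁅x, y⁆ ∈ gammaB n 2 :=
  ⟨⁅(⟨x, hx⟩ : P n), ⟨y, hy⟩⁆,
    Subgroup.commutator_mem_commutator (Subgroup.mem_top _) (Subgroup.mem_top _),
    map_commutatorElement _ _ _⟩

lemma commutator_mem_gammaB_three {α g : B n} (hα : α ∈ P n) (hg : g ∈ gammaB n 2) :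
    ⁅α, g⁆ ∈ gammaB n 3 := by
  obtain ⟨y, hy, rfl⟩ := hg
  refine ⟨⁅(⟨α, hα⟩ : P n), y⁆, ?_, map_commutatorElement _ _ _⟩
  rw [← commutatorElement_inv]
  exact inv_mem (Subgroup.commutator_mem_commutator hy (Subgroup.mem_top _))

lemma map_c2_burau_conj_apply {g : B n} (hg : g ∈ gammaB n 2) (β : B n) (k l : Fin n) :
    (burau n (β * g * β⁻¹) : Matrix (Fin n) (Fin n) Jet).map Jet.c2 (braidπ n β k) (braidπ n β l) =
      (burau n g : Matrix (Fin n) (Fin n) Jet).map Jet.c2 k l := by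
  rw [map_mul, map_mul, map_inv, map_c2_conj_of_mem_level2 _ (burau_mem_level2 hg), ← map_inv,
    map_c0_burau, map_c0_burau, map_inv, Matrix.permMatrixHom_apply, Matrix.permMatrixHom_apply,
    inv_inv, PEquiv.toMatrix_toPEquiv_mul, PEquiv.mul_toMatrix_toPEquiv]
  simp

lemma map_c2_burau_apply_eq_of_forall_commutator_mem {α : B n}
    (hcomm : ∀ g ∈ gammaB n 2, ⁅α, g⁆ ∈ gammaB n 3) {g : B n} (hg : g ∈ gammaB n 2)
    (k l : Fin n) :
    (burau n g : Matrix (Fin n) (Fin n) Jet).map Jet.c2 (braidπ n α k) (braidπ n α l) =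
      (burau n g : Matrix (Fin n) (Fin n) Jet).map Jet.c2 k l := by
  have hconj : burau n (α * g * α⁻¹) = burau n g := by
    rw [show α * g * α⁻¹ = ⁅α, g⁆ * g by group, map_mul,
      burau_eq_one_of_mem_gammaB_three (hcomm g hg), one_mul]
  simpa only [hconj] using map_c2_burau_conj_apply hg α k l

end Gamma

section Witness

variable {n : ℕ}

lemma braidA_succ (n i : ℕ) : braidA n i (i + 1) = braidGen n (i - 1) ^ 2 := by
  simp [braidA, braidChain]

lemma sq_braidGen_mem_P (n i : ℕ) : braidGen n i ^ 2 ∈ P n := by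
  unfold braidGen
  split_ifs
  · rw [P, MonoidHom.mem_ker, map_pow, braidπ, PresentedGroup.toGroup.of, permGen, sq,
      Equiv.swap_mul_self]
  · rw [one_pow]
    exact one_mem _

lemma commutator_braidA_mem_gammaB_two (n : ℕ) : ⁅braidA n 1 2, braidA n 2 3⁆ ∈ gammaB n 2 := by
  rw [braidA_succ, braidA_succ]
  exact commutator_mem_gammaB_two (sq_braidGen_mem_P n _) (sq_braidGen_mem_P n _)

lemma burau_braidGen {i : ℕ} (h : i < n - 1) : burau n (braidGen n i) = burauGen n ⟨i, h⟩ := by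
  rw [braidGen, dif_pos h, burau_of]

lemma burau_commutator_braidA (h : 3 ≤ n) : burau n ⁅braidA n 1 2, braidA n 2 3⁆ =
    embedGL (blockEmb 0 h) ⁅burauA ^ 2, burauB ^ 2⁆ := by
  rw [braidA_succ, braidA_succ, map_commutatorElement, map_pow, map_pow,
    burau_braidGen (by omega), burau_braidGen (by omega),
    burauGen_eq_embedGL_burauA ⟨0, by omega⟩ h,
    burauGen_eq_embedGL_burauB ⟨0, by omega⟩ ⟨1, by omega⟩ h rfl,
    map_commutatorElement, map_pow, map_pow]

lemma commutator_burauA_sq_burauB_sq_apply_zero_two :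
    ((⁅burauA ^ 2, burauB ^ 2⁆ : (Matrix (Fin 3) (Fin 3) Jet)ˣ) : Matrix (Fin 3) (Fin 3) Jet) 0 2
      = ⟨0, 0, 1⟩ := by
  decide

lemma map_c2_burau_commutator_braidA_apply_zero_two (h : 3 ≤ n) :
    (burau n ⁅braidA n 1 2, braidA n 2 3⁆ : Matrix (Fin n) (Fin n) Jet).map Jet.c2
      ⟨0, by omega⟩ ⟨2, by omega⟩ = 1 := by
  rw [burau_commutator_braidA h, coe_embedGL, Matrix.map_apply]
  exact congrArg Jet.c2 ((embedMatrix_apply_image (blockEmb (m := 3) 0 h) _ 0 2).trans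
    commutator_burauA_sq_burauB_sq_apply_zero_two)

lemma map_c2_burau_commutator_braidA_apply_of_le (h : 3 ≤ n) {k : Fin n} (hk : 3 ≤ (k : ℕ))
    (l : Fin n) :
    (burau n ⁅braidA n 1 2, braidA n 2 3⁆ : Matrix (Fin n) (Fin n) Jet).map Jet.c2 k l = 0 := by
  have hk' : k ∉ Set.range (blockEmb (m := 3) 0 h) := by
    rintro ⟨a, rfl⟩
    simp at hk
    omega
  rw [burau_commutator_braidA h, coe_embedGL, Matrix.map_apply,
    embedMatrix_apply_of_notMem_range_left _ _ hk', Matrix.one_apply]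
  split_ifs <;> rfl

end Witness

lemma exists_conj_apply_eq_of_ne_one {α : Type*} [DecidableEq α] {s : Equiv.Perm α} (hs : s ≠ 1)
    {x y : α} (hxy : x ≠ y) : ∃ u : Equiv.Perm α, (u⁻¹ * s * u) x = y := by
  obtain ⟨a, ha⟩ : ∃ a, s a ≠ a := by
    by_contra! h
    exact hs (Equiv.ext h)
  set z := Equiv.swap x a (s a)
  have hxz : x ≠ z := by
    rw [ne_comm, Ne, Equiv.swap_apply_eq_iff, Equiv.swap_apply_left]
    exact ha
  refine ⟨Equiv.swap x a * Equiv.swap z y, ?_⟩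
  simp [Equiv.Perm.mul_apply, Equiv.swap_apply_of_ne_of_ne hxz hxy, z]

lemma braidπ_surjective (n : ℕ) : Function.Surjective (braidπ n) := by
  rcases n with _ | m
  · exact fun s => ⟨1, Subsingleton.elim _ _⟩
  refine MonoidHom.range_eq_top.mp (top_le_iff.mp ?_)
  rw [← Subgroup.closure_eq_top_of_mclosure_eq_top (Equiv.Perm.mclosure_swap_castSucc_succ m),
    Subgroup.closure_le]
  rintro _ ⟨i, rfl⟩
  exact ⟨.of ⟨i, by omega⟩, PresentedGroup.toGroup.of _⟩

end BraidProj

open scoped commutatorElement in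
open BraidProj in
/-- For `n ≥ 4` and `α ∈ B_n`: `α` is a pure braid if and only if `α`
commutes with every element of `Γ_2(P_n)` modulo `Γ_3(P_n)`; i.e. the action
of `B_n/Γ_3(P_n)` on `Γ_2(P_n)/Γ_3(P_n)` factors through a faithful action
of `S_n`. -/
theorem pure_iff_commutes_mod_gamma3 (n : ℕ) (hn : 4 ≤ n) (α : B n) :
    α ∈ P n ↔ ∀ g ∈ gammaB n 2, ⁅α, g⁆ ∈ gammaB n 3 := by
  refine ⟨fun hα g hg => commutator_mem_gammaB_three hα hg, fun hcomm => ?_⟩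
  by_contra hα
  obtain ⟨u, hu⟩ := exists_conj_apply_eq_of_ne_one (s := braidπ n α) hα
    (x := ⟨0, by omega⟩) (y := ⟨3, by omega⟩) (by simp)
  obtain ⟨γ, rfl⟩ := braidπ_surjective n u
  set w := ⁅braidA n 1 2, braidA n 2 3⁆
  have hw : w ∈ gammaB n 2 := commutator_braidA_mem_gammaB_two n
  have hg : γ * w * γ⁻¹ ∈ gammaB n 2 := (gammaB_normal n 2).conj_mem w hw γ
  have hu' : braidπ n α (braidπ n γ ⟨0, by omega⟩) = braidπ n γ ⟨3, by omega⟩ := by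
    rw [← hu]
    simp [Equiv.Perm.mul_apply]
  have h02 := map_c2_burau_commutator_braidA_apply_zero_two (n := n) (by omega)
  rw [← map_c2_burau_conj_apply hw γ, ← map_c2_burau_apply_eq_of_forall_commutator_mem hcomm hg,
    hu', ← Equiv.apply_symm_apply (braidπ n γ) (braidπ n α (braidπ n γ _)),
    map_c2_burau_conj_apply hw γ, map_c2_burau_commutator_braidA_apply_of_le (by omega) le_rfl]
    at h02
  exact zero_ne_one h02
end
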